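/- Let H_A be a Hilbert space of dimension d₁·d₂, Π a projector on H_A with Tr Π = d₁, and ρ a density operator on H_A commuting with Π such that Tr(ρΠ) ≥ 1 − ε. Then there exists a unitary U : H_A → H_B ⊗ H_C with dim H_B = d₁ and dim H_C = d₂, and a unit vector |0⟩ in H_C, such that ‖U ρ U† − Tr_C'(ΠρΠ viewed on H_B) ⊗ |0⟩⟨0|‖₁ ≤ ε, i.e. UρU† is ε-close in trace norm to a state of the form σ^B ⊗ |0⟩⟨0|^C where σ^B is the compression ΠρΠ regarded as an operator on H_B. -/

import Mathlib

open Matrix Kronecker BigOperators ComplexOrder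

/-- Trace norm `‖A‖₁ = Tr √(Aᴴ A)`. -/
noncomputable def traceNorm {n : Type*} [Fintype n] [DecidableEq n]
    (A : Matrix n n ℂ) : ℝ :=
  (((Matrix.posSemidef_conjTranspose_mul_self A).1.eigenvectorUnitary.1 *
      Matrix.diagonal (fun i => ((Real.sqrt
        ((Matrix.posSemidef_conjTranspose_mul_self A).1.eigenvalues i) : ℝ) : ℂ)) *
      (star (Matrix.posSemidef_conjTranspose_mul_self A).1.eigenvectorUnitary :
        Matrix n n ℂ)).trace).re

/-- Von Neumann entropy (base 2), via eigenvalues; `0` for non-Hermitian input. -/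
noncomputable def vnEntropy {n : Type*} [Fintype n] [DecidableEq n]
    (ρ : Matrix n n ℂ) : ℝ :=
  if h : ρ.IsHermitian then
    -∑ i, (h.eigenvalues i) * Real.logb 2 (h.eigenvalues i)
  else 0

/-- A density operator: positive semidefinite with unit trace. -/
def IsDensity {n : Type*} [Fintype n] (ρ : Matrix n n ℂ) : Prop :=
  ρ.PosSemidef ∧ ρ.trace = 1

/-- Rank-one projector `|v⟩⟨v|`. -/
noncomputable def proj {n : Type*} (v : n → ℂ) : Matrix n n ℂ :=
  Matrix.vecMulVec v (star v)

/-- Partial trace over the second tensor factor. -/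
noncomputable def ptraceSnd {a b : Type*} [Fintype b]
    (ρ : Matrix (a × b) (a × b) ℂ) : Matrix a a ℂ :=
  Matrix.of fun i j => ∑ k, ρ (i, k) (j, k)

/-- Partial trace over the first tensor factor. -/
noncomputable def ptraceFst {a b : Type*} [Fintype a]
    (ρ : Matrix (a × b) (a × b) ℂ) : Matrix b b ℂ :=
  Matrix.of fun i j => ∑ k, ρ (k, i) (k, j)

/-- Quantum mutual information `I(A;B) = H(A) + H(B) − H(AB)`. -/
noncomputable def mutualInfo {a b : Type*} [Fintype a] [Fintype b]
    [DecidableEq a] [DecidableEq b] (ρ : Matrix (a × b) (a × b) ℂ) : ℝ :=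
  vnEntropy (ptraceSnd ρ) + vnEntropy (ptraceFst ρ) - vnEntropy ρ

/-- `n`-fold tensor power of a matrix. -/
noncomputable def tpow {d : ℕ} (ρ : Matrix (Fin d) (Fin d) ℂ) (n : ℕ) :
    Matrix (Fin n → Fin d) (Fin n → Fin d) ℂ :=
  Matrix.of fun f g => ∏ i, ρ (f i) (g i)

/-- The cq state obtained by measuring the `A` part of a bipartite state with POVM `Λ`:
`ρ^{XB} = Σ_x |x⟩⟨x| ⊗ Tr_A((Λ_x ⊗ I)ρ)`. -/
noncomputable def measureA {a b m : Type*} [Fintype a] [DecidableEq m]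
    (Λ : m → Matrix a a ℂ) (ρ : Matrix (a × b) (a × b) ℂ) :
    Matrix (m × b) (m × b) ℂ :=
  Matrix.of fun xi yj =>
    if xi.1 = yj.1 then ∑ k, ∑ l, (Λ xi.1) k l * ρ (l, xi.2) (k, yj.2) else 0

/-- Unitarity for (possibly rectangular between index types) matrices. -/
def IsUnitaryMat {p q : Type*} [Fintype p] [Fintype q] [DecidableEq p] [DecidableEq q]
    (U : Matrix p q ℂ) : Prop :=
  U * Uᴴ = 1 ∧ Uᴴ * U = 1

/-!
Diagonalise `Π`: its eigenvalues are `0` and `1`, exactly `d₁` of them equal to `1`, so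
reindexing an eigenbasis along a bijection `Fin (d₁ * d₂) ≃ Fin d₁ × Fin d₂` that sends the
eigenvalue-`1` indices onto `Fin d₁ × {0}` gives a unitary `U` with `U Π U† = 1 ⊗ |0⟩⟨0|`.
Hence `U (Π ρ Π) U† = σ ⊗ |0⟩⟨0|` with `σ` the `(·, 0)`-block of `U ρ U†`. As `[Π, ρ] = 0`,
`ρ - Π ρ Π = (1 - Π) ρ (1 - Π)` is positive, so its trace norm is its trace `1 - Tr(ρ Π) ≤ ε`.
-/

open scoped MatrixOrder in
/-- The eigen-decomposition in `traceNorm` is the functional calculus of `√` at `Aᴴ * A`, and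
`√(Aᴴ * A) = A` for `A ≥ 0`. -/
lemma traceNorm_of_posSemidef {n : Type*} [Fintype n] [DecidableEq n]
    {A : Matrix n n ℂ} (hA : A.PosSemidef) : traceNorm A = A.trace.re := by
  have hAA := posSemidef_conjTranspose_mul_self A
  have hsqrt : CFC.sqrt (Aᴴ * A) = A := by
    rw [hA.1.eq, CFC.sqrt_mul_self A hA.nonneg]
  rw [CFC.sqrt_eq_cfc, cfc_nnreal_eq_real _ (Aᴴ * A) hAA.nonneg, hAA.1.cfc_eq] at hsqrt
  unfold traceNorm
  congr 3
  refine Eq.trans ?_ hsqrt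
  simp [IsHermitian.cfc, Function.comp_def, Real.coe_sqrt, Real.coe_toNNReal',
    hAA.eigenvalues_nonneg]

lemma IsDensity.nonempty {n : Type*} [Fintype n] {ρ : Matrix n n ℂ} (hρ : IsDensity ρ) :
    Nonempty n := by
  by_contra hn
  have : ρ.trace = 0 := by
    simp [trace, not_nonempty_iff.mp hn]
  exact one_ne_zero (hρ.2.symm.trans this)

lemma exists_equiv_forall_iff_of_card_eq {α β : Type*} [Fintype α] [Fintype β]
    {p : α → Prop} {q : β → Prop} [DecidablePred p] [DecidablePred q]
    (h : Fintype.card α = Fintype.card β)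
    (hpq : Fintype.card {x // p x} = Fintype.card {y // q y}) :
    ∃ e : α ≃ β, ∀ x, q (e x) ↔ p x := by
  have hcompl : Fintype.card {x // ¬p x} = Fintype.card {y // ¬q y} := by
    rw [Fintype.card_subtype_compl, Fintype.card_subtype_compl, h, hpq]
  refine ⟨(Equiv.sumCompl p).symm.trans (((Fintype.equivOfCardEq hpq).sumCongr
    (Fintype.equivOfCardEq hcompl)).trans (Equiv.sumCompl q)), fun x => ?_⟩
  by_cases hx : p x
  · simpa [Equiv.sumCompl_symm_apply_of_pos hx, hx] using (Fintype.equivOfCardEq hpq ⟨x, hx⟩).2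
  · simpa [Equiv.sumCompl_symm_apply_of_neg hx, hx] using
      (Fintype.equivOfCardEq hcompl ⟨x, hx⟩).2

namespace IsUnitaryMat

variable {p q : Type*} [Fintype p] [Fintype q] [DecidableEq p] [DecidableEq q]
  {U : Matrix p q ℂ}

lemma trace_mul_mul_conjTranspose (hU : IsUnitaryMat U) (M : Matrix q q ℂ) :
    (U * M * Uᴴ).trace = M.trace := by
  rw [trace_mul_cycle, hU.2, Matrix.one_mul]

lemma mul_mul_conjTranspose_mul (hU : IsUnitaryMat U) (A B : Matrix q q ℂ) :
    U * (A * B) * Uᴴ = (U * A * Uᴴ) * (U * B * Uᴴ) := by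
  simp only [Matrix.mul_assoc]
  rw [← Matrix.mul_assoc Uᴴ U, hU.2, Matrix.one_mul]

lemma submatrix_of_mem_unitaryGroup {W : Matrix q q ℂ} (hW : W ∈ unitaryGroup q ℂ)
    (e : p ≃ q) : IsUnitaryMat (W.submatrix e id) := by
  have hWW : W * Wᴴ = 1 := mem_unitaryGroup_iff.mp hW
  have hWW' : Wᴴ * W = 1 := mem_unitaryGroup_iff'.mp hW
  constructor
  · rw [conjTranspose_submatrix, ← submatrix_mul _ _ _ _ _ Function.bijective_id, hWW,
      submatrix_one_equiv]
  · rw [conjTranspose_submatrix, submatrix_mul_equiv, hWW', submatrix_id_id]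

end IsUnitaryMat

namespace Matrix.IsHermitian

variable {n : Type*} [Fintype n] [DecidableEq n] {P : Matrix n n ℂ}

lemma eigenvalues_eq_zero_or_one (hP : P.IsHermitian) (hP2 : IsIdempotentElem P) (i : n) :
    hP.eigenvalues i = 0 ∨ hP.eigenvalues i = 1 :=
  hP2.spectrum_subset ℝ (hP.eigenvalues_mem_spectrum_real i)

lemma card_eigenvalues_eq_one_eq_trace (hP : P.IsHermitian) (hP2 : IsIdempotentElem P) :
    (Fintype.card {i // hP.eigenvalues i = 1} : ℂ) = P.trace := by
  rw [hP.trace_eq_sum_eigenvalues, Fintype.card_subtype, Finset.card_filter]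
  push_cast
  refine Finset.sum_congr rfl fun i _ => ?_
  rcases hP.eigenvalues_eq_zero_or_one hP2 i with h | h <;> simp [h]

end Matrix.IsHermitian

lemma one_kronecker_proj_single_eq_diagonal {a b : Type*} [DecidableEq a] [DecidableEq b]
    (b₀ : b) :
    (1 : Matrix a a ℂ) ⊗ₖ proj (Pi.single b₀ 1) =
      diagonal fun x => if x.2 = b₀ then 1 else 0 := by
  ext ⟨i, k⟩ ⟨j, l⟩
  by_cases hk : k = b₀ <;> by_cases hl : l = b₀ <;> by_cases hij : i = j <;>
    simp [proj, vecMulVec_apply, one_apply, diagonal_apply, hk, hl, hij, Ne.symm]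

lemma one_kronecker_proj_single_mul_mul {a b : Type*} [Fintype a] [DecidableEq a] [Fintype b]
    [DecidableEq b] (b₀ : b) (X : Matrix (a × b) (a × b) ℂ) :
    (1 ⊗ₖ proj (Pi.single b₀ 1)) * X * (1 ⊗ₖ proj (Pi.single b₀ 1)) =
      X.submatrix (·, b₀) (·, b₀) ⊗ₖ proj (Pi.single b₀ 1) := by
  rw [one_kronecker_proj_single_eq_diagonal]
  ext ⟨i, k⟩ ⟨j, l⟩
  by_cases hk : k = b₀ <;> by_cases hl : l = b₀ <;>
    simp [mul_diagonal, diagonal_mul, proj, vecMulVec_apply, hk, hl]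

theorem Matrix.IsHermitian.exists_isUnitaryMat_conj_eq_one_kronecker_proj {n a b : Type*}
    [Fintype n] [DecidableEq n] [Fintype a] [DecidableEq a] [Fintype b] [DecidableEq b]
    {P : Matrix n n ℂ} (hP : P.IsHermitian) (hP2 : IsIdempotentElem P)
    (htr : P.trace = Fintype.card a) (hcard : Fintype.card n = Fintype.card (a × b)) (b₀ : b) :
    ∃ U : Matrix (a × b) n ℂ, IsUnitaryMat U ∧ U * P * Uᴴ = 1 ⊗ₖ proj (Pi.single b₀ 1) := by
  have hfiber : Fintype.card {x : a × b // x.2 = b₀} = Fintype.card a :=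
    Fintype.card_congr ⟨fun x => x.1.1, fun i => ⟨(i, b₀), rfl⟩, by rintro ⟨⟨i, k⟩, rfl⟩; rfl,
      fun _ => rfl⟩
  have hrange :
      Fintype.card {i // hP.eigenvalues i = 1} = Fintype.card {x : a × b // x.2 = b₀} := by
    rw [hfiber]; exact_mod_cast (hP.card_eigenvalues_eq_one_eq_trace hP2).trans htr
  obtain ⟨g, hg⟩ := exists_equiv_forall_iff_of_card_eq hcard hrange
  set V : Matrix n n ℂ := ↑hP.eigenvectorUnitary
  have hdiag : star V * P * V = diagonal (fun i => (hP.eigenvalues i : ℂ)) := by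
    simpa [Function.comp_def] using hP.conjStarAlgAut_star_eigenvectorUnitary
  refine ⟨(star V).submatrix g.symm id,
    IsUnitaryMat.submatrix_of_mem_unitaryGroup (star hP.eigenvectorUnitary).2 g.symm, ?_⟩
  calc (star V).submatrix g.symm id * P * ((star V).submatrix g.symm id)ᴴ
      = (star V * P * V).submatrix g.symm g.symm := by
        rw [submatrix_mul _ _ _ id _ Function.bijective_id,
          submatrix_mul _ _ _ id _ Function.bijective_id, submatrix_id_id,
          conjTranspose_submatrix, star_eq_conjTranspose, conjTranspose_conjTranspose]
    _ = diagonal fun x => if x.2 = b₀ then 1 else 0 := by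
        rw [hdiag, submatrix_diagonal_equiv]
        congr 1; funext x
        have := hg (g.symm x)
        rcases hP.eigenvalues_eq_zero_or_one hP2 (g.symm x) with h | h <;> simp_all
    _ = 1 ⊗ₖ proj (Pi.single b₀ 1) := (one_kronecker_proj_single_eq_diagonal b₀).symm

lemma Matrix.PosSemidef.sub_mul_mul_of_commute {n : Type*} [Fintype n] [DecidableEq n]
    {ρ P : Matrix n n ℂ} (hρ : ρ.PosSemidef) (hP : P.IsHermitian) (hP2 : IsIdempotentElem P)
    (hcomm : P * ρ = ρ * P) : (ρ - P * ρ * P).PosSemidef := by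
  have hPρP : P * ρ * P = ρ * P := by rw [hcomm, Matrix.mul_assoc, hP2.eq]
  have hdefect : ρ - P * ρ * P = (1 - P) * ρ * (1 - P)ᴴ := by
    rw [conjTranspose_sub, conjTranspose_one, hP.eq]
    simp only [Matrix.sub_mul, Matrix.mul_sub, Matrix.one_mul, Matrix.mul_one]
    rw [hPρP, hcomm]
    abel
  rw [hdefect]
  exact hρ.mul_mul_conjTranspose_same _

theorem compression_unitary {d₁ d₂ : ℕ}
    (ρ P : Matrix (Fin (d₁ * d₂)) (Fin (d₁ * d₂)) ℂ) (ε : ℝ)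
    (hρ : IsDensity ρ) (hP : P.IsHermitian) (hP2 : P * P = P)
    (htr : P.trace = (d₁ : ℂ)) (hcomm : P * ρ = ρ * P)
    (h : 1 - ε ≤ (ρ * P).trace.re) :
    ∃ U : Matrix (Fin d₁ × Fin d₂) (Fin (d₁ * d₂)) ℂ, IsUnitaryMat U ∧
      ∃ v : Fin d₂ → ℂ, star v ⬝ᵥ v = 1 ∧
        ∃ σB : Matrix (Fin d₁) (Fin d₁) ℂ,
          U * (P * ρ * P) * Uᴴ = σB ⊗ₖ proj v ∧
          traceNorm (U * ρ * Uᴴ - σB ⊗ₖ proj v) ≤ ε := by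
  have : NeZero d₂ := ⟨by rintro rfl; obtain ⟨i⟩ := hρ.nonempty; exact absurd i.2 (by simp)⟩
  obtain ⟨U, hU, hUPU⟩ := hP.exists_isUnitaryMat_conj_eq_one_kronecker_proj (a := Fin d₁) hP2
    (by simpa using htr) (by simp) (0 : Fin d₂)
  set v : Fin d₂ → ℂ := Pi.single 0 1
  set σB := (U * ρ * Uᴴ).submatrix (·, 0) (·, 0)
  have hcompress : U * (P * ρ * P) * Uᴴ = σB ⊗ₖ proj v := by
    rw [hU.mul_mul_conjTranspose_mul, hU.mul_mul_conjTranspose_mul, hUPU,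
      one_kronecker_proj_single_mul_mul]
  refine ⟨U, hU, v, by simp [v], σB, hcompress, ?_⟩
  have hdefect := (hρ.1.sub_mul_mul_of_commute hP hP2 hcomm).mul_mul_conjTranspose_same U
  rw [← hcompress, ← Matrix.sub_mul, ← Matrix.mul_sub, traceNorm_of_posSemidef hdefect,
    hU.trace_mul_mul_conjTranspose, trace_sub, hρ.2, hcomm, Matrix.mul_assoc, hP2,
    Complex.sub_re, Complex.one_re]
  linarith
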